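/- Let b ∈ ℝ⟦s,λ⟧ be defined as follows: with Tutte's series τ, set r := s·(1+λs)^{−1} + τ(λ), let g ∈ ℝ⟦s,λ⟧ be the unique formal power series with constant coefficient 1 satisfying g² = (1+r)² − 4s, and set b := s + (1+λs)·g. Write b = Σ_{l=0}^∞ B_l(s)·λˡ with B_l ∈ ℝ⟦s⟧. Fix l ≥ 0 and suppose that B_m is a polynomial in s for all m ≤ l. Then (s−1)·B_{l+1} is a polynomial in s. -/

import Mathlib

/-!
Set `L = 1 + λs`. Since `L·(1 + r) = L + s + L·τ`, the series `b - s = L·g` satisfies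
`(b - s)² = L²·((1 + r)² - 4s) = (L + s + L·τ)² - 4s·L²`, whose `λ`-coefficients are
polynomials in `s`. Comparing `λ^{l+1}`-coefficients of `(b - s)²`, the only term not made
of `B_0, …, B_l` is `2·(B_0 - s)·B_{l+1}`, and `B_0 - s = 1 - s` because the constant
coefficient of `g` is the root `1 - s` of `(1 + s)² - 4s`.
-/

/- We realize `ℝ⟦s,λ⟧` as the iterated power series ring `(ℝ⟦s⟧)⟦λ⟧`:
the inner variable is `s` and the outer variable is `λ`. -/

/-- The variable `s` in `(ℝ⟦s⟧)⟦λ⟧`. -/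
noncomputable def sVar : PowerSeries (PowerSeries ℝ) :=
  PowerSeries.C PowerSeries.X

/-- The variable `λ` in `(ℝ⟦s⟧)⟦λ⟧`. -/
noncomputable def lVar : PowerSeries (PowerSeries ℝ) :=
  PowerSeries.X

/-- Tutte's series `τ(λ) = Σ_{i≥1} [2·(4i+1)! / ((i+1)!·(3i+2)!)]·λⁱ`,
viewed in `(ℝ⟦s⟧)⟦λ⟧`. -/
noncomputable def tutteSeries : PowerSeries (PowerSeries ℝ) :=
  PowerSeries.mk fun i =>
    if i = 0 then 0
    else PowerSeries.C
      (2 * (Nat.factorial (4 * i + 1) : ℝ) /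
        ((Nat.factorial (i + 1) : ℝ) * (Nat.factorial (3 * i + 2) : ℝ)))

open PowerSeries Finset

theorem PowerSeries.two_mul_constantCoeff_mul_coeff_succ_mem {R : Type*} [CommRing R]
    (S : Subring R) {f : R⟦X⟧} {l : ℕ} (hsq : coeff (l + 1) (f ^ 2) ∈ S)
    (hf : ∀ m ≤ l, coeff m f ∈ S) :
    2 * constantCoeff f * coeff (l + 1) f ∈ S := by
  rw [sq, coeff_mul, Nat.sum_antidiagonal_succ] at hsq
  rw [← coeff_zero_eq_constantCoeff]
  cases l with
  | zero =>
    convert hsq using 1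
    simp only [Nat.antidiagonal_zero, sum_singleton]
    ring
  | succ k =>
    rw [Nat.sum_antidiagonal_succ'] at hsq
    have hmid : ∑ p ∈ antidiagonal k, coeff (p.1 + 1) f * coeff (p.2 + 1) f ∈ S :=
      sum_mem fun p hp => by
        rw [HasAntidiagonal.mem_antidiagonal] at hp
        exact mul_mem (hf _ (by omega)) (hf _ (by omega))
    convert sub_mem hsq hmid using 1
    ring

theorem PowerSeries.eq_of_sq_eq_sq_of_constantCoeff_eq {R : Type*} [CommRing R] [IsDomain R]
    {f g : R⟦X⟧} (hsq : f ^ 2 = g ^ 2) (hc : constantCoeff f = constantCoeff g)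
    (h2 : (2 : R) ≠ 0) (hg : constantCoeff g ≠ 0) : f = g := by
  refine (sq_eq_sq_iff_eq_or_eq_neg.mp hsq).resolve_right fun hneg => ?_
  rw [hneg, map_neg, neg_eq_iff_add_eq_zero, ← two_mul] at hc
  exact mul_ne_zero h2 hg hc

theorem PowerSeries.coeff_mem_range_of_mem_range_map {R S : Type*} [CommRing R] [CommRing S]
    (φ : R →+* S) {f : S⟦X⟧} (hf : f ∈ (map φ).range) (n : ℕ) : coeff n f ∈ φ.range := by
  obtain ⟨F, rfl⟩ := hf
  exact ⟨coeff n F, (coeff_map φ n F).symm⟩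

noncomputable abbrev polynomialsInS : Subring (PowerSeries ℝ) :=
  (Polynomial.coeToPowerSeries.ringHom : Polynomial ℝ →+* PowerSeries ℝ).range

noncomputable abbrev polynomialCoeffSeries : Subring (PowerSeries (PowerSeries ℝ)) :=
  (map (Polynomial.coeToPowerSeries.ringHom : Polynomial ℝ →+* PowerSeries ℝ)).range

theorem mem_polynomialsInS_iff {x : PowerSeries ℝ} :
    x ∈ polynomialsInS ↔ ∃ p : Polynomial ℝ, (p : PowerSeries ℝ) = x :=
  Iff.rfl

theorem C_mem_polynomialsInS (c : ℝ) : C c ∈ polynomialsInS :=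
  ⟨Polynomial.C c, by rw [Polynomial.coeToPowerSeries.ringHom_apply, Polynomial.coe_C]⟩

theorem coeff_mem_polynomialsInS {f : PowerSeries (PowerSeries ℝ)}
    (hf : f ∈ polynomialCoeffSeries) (n : ℕ) : coeff n f ∈ polynomialsInS :=
  coeff_mem_range_of_mem_range_map _ hf n

theorem sVar_mem_polynomialCoeffSeries : sVar ∈ polynomialCoeffSeries :=
  ⟨C Polynomial.X, by simp [sVar, Polynomial.coeToPowerSeries.ringHom_apply]⟩

theorem lVar_mem_polynomialCoeffSeries : lVar ∈ polynomialCoeffSeries :=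
  ⟨X, map_X _⟩

theorem tutteSeries_mem_polynomialCoeffSeries : tutteSeries ∈ polynomialCoeffSeries := by
  refine ⟨mk fun i => if i = 0 then 0 else Polynomial.C
      (2 * (Nat.factorial (4 * i + 1) : ℝ) /
        ((Nat.factorial (i + 1) : ℝ) * (Nat.factorial (3 * i + 2) : ℝ))), ?_⟩
  ext n : 1
  by_cases h : n = 0 <;>
    simp [h, tutteSeries, Polynomial.coeToPowerSeries.ringHom_apply]

theorem constantCoeff_tutteSeries : constantCoeff tutteSeries = 0 := by
  simp [tutteSeries]

theorem constantCoeff_sVar : constantCoeff sVar = X :=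
  constantCoeff_C _

theorem coeff_succ_sVar (n : ℕ) : coeff (n + 1) sVar = 0 := by
  simp [sVar]

section

variable {inv r g b : PowerSeries (PowerSeries ℝ)}

theorem constantCoeff_eq_one_sub_X (hinv : (1 + lVar * sVar) * inv = 1)
    (hr : r = sVar * inv + tutteSeries)
    (hg1 : constantCoeff (constantCoeff g) = 1) (hg2 : g ^ 2 = (1 + r) ^ 2 - 4 * sVar) :
    constantCoeff g = 1 - X := by
  have hinv0 : constantCoeff inv = 1 := by
    simpa [lVar, constantCoeff_sVar] using congrArg constantCoeff hinv
  have hr0 : constantCoeff r = X := by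
    simp [hr, constantCoeff_sVar, hinv0, constantCoeff_tutteSeries]
  refine eq_of_sq_eq_sq_of_constantCoeff_eq ?_ (by simp [hg1]) two_ne_zero (by simp)
  rw [← map_pow, hg2]
  simp only [map_sub, map_pow, map_add, map_one, map_mul, map_ofNat, hr0, constantCoeff_sVar]
  ring

theorem sq_sub_sVar_mem_polynomialCoeffSeries (hinv : (1 + lVar * sVar) * inv = 1)
    (hr : r = sVar * inv + tutteSeries) (hg2 : g ^ 2 = (1 + r) ^ 2 - 4 * sVar)
    (hb : b = sVar + (1 + lVar * sVar) * g) :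
    (b - sVar) ^ 2 ∈ polynomialCoeffSeries := by
  have hL : (1 + lVar * sVar) * (1 + r) =
      1 + lVar * sVar + sVar + (1 + lVar * sVar) * tutteSeries := by
    linear_combination (1 + lVar * sVar) * hr + sVar * hinv
  have hsq : (b - sVar) ^ 2 = (1 + lVar * sVar + sVar + (1 + lVar * sVar) * tutteSeries) ^ 2 -
      4 * sVar * (1 + lVar * sVar) ^ 2 := by
    linear_combination (b - sVar + (1 + lVar * sVar) * g) * hb + (1 + lVar * sVar) ^ 2 * hg2 +
      ((1 + lVar * sVar) * (1 + r) +
        (1 + lVar * sVar + sVar + (1 + lVar * sVar) * tutteSeries)) * hL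
  have hs := sVar_mem_polynomialCoeffSeries
  have hL_mem : 1 + lVar * sVar ∈ polynomialCoeffSeries :=
    add_mem (one_mem _) (mul_mem lVar_mem_polynomialCoeffSeries hs)
  rw [hsq]
  refine sub_mem (pow_mem (add_mem (add_mem hL_mem hs)
    (mul_mem hL_mem tutteSeries_mem_polynomialCoeffSeries)) 2) ?_
  exact mul_mem (mul_mem (ofNat_mem _ 4) hs) (pow_mem hL_mem 2)

end

/-- With `r = s·(1+λs)⁻¹ + τ(λ)`, `g` the unique square root of
`(1+r)² − 4s` with constant coefficient `1`, `b = s + (1+λs)·g`, and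
`b = Σ_l B_l(s)·λˡ`: if `B_m` is a polynomial in `s` for all `m ≤ l`, then
`(s−1)·B_{l+1}` is a polynomial in `s`. -/
theorem sMinusOne_mul_next_coeff_polynomial
    (inv r g b : PowerSeries (PowerSeries ℝ))
    (hinv : (1 + lVar * sVar) * inv = 1)
    (hr : r = sVar * inv + tutteSeries)
    (hg1 : PowerSeries.constantCoeff
      (PowerSeries.constantCoeff g) = 1)
    (hg2 : g ^ 2 = (1 + r) ^ 2 - 4 * sVar)
    (hb : b = sVar + (1 + lVar * sVar) * g)
    (l : ℕ)
    (hpoly : ∀ m ≤ l, ∃ p : Polynomial ℝ,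
      (p : PowerSeries ℝ) = PowerSeries.coeff m b) :
    ∃ q : Polynomial ℝ,
      (q : PowerSeries ℝ) =
        (PowerSeries.X - 1) * PowerSeries.coeff (l + 1) b := by
  have hb0 : constantCoeff b = 1 := by
    simp [hb, constantCoeff_eq_one_sub_X hinv hr hg1 hg2, constantCoeff_sVar, lVar]
  have hlow (m : ℕ) (hm : m ≤ l) : coeff m (b - sVar) ∈ polynomialsInS := by
    rw [map_sub]
    exact sub_mem (mem_polynomialsInS_iff.2 (hpoly m hm))
      (coeff_mem_polynomialsInS sVar_mem_polynomialCoeffSeries m)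
  have hsq := sq_sub_sVar_mem_polynomialCoeffSeries hinv hr hg2 hb
  have key := two_mul_constantCoeff_mul_coeff_succ_mem polynomialsInS
    (coeff_mem_polynomialsInS hsq (l + 1)) hlow
  rw [map_sub, map_sub, hb0, constantCoeff_sVar, coeff_succ_sVar, sub_zero] at key
  have half : C (-2⁻¹ : ℝ) * 2 = -1 := by
    rw [← map_ofNat C 2, ← map_mul]
    norm_num
  refine mem_polynomialsInS_iff.1 ?_
  convert mul_mem (C_mem_polynomialsInS (-2⁻¹)) key using 1
  linear_combination (-(1 - X) * coeff (l + 1) b) * half
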